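/- arXiv:1412.4626 — 3 statements merged into one kernel-verified Lean document; each statement's English description precedes it below -/
import Mathlib

section
/- Let β be an element of order n in an extension F_{q^m} of F_q, and let g(X) = lcm of the minimal polynomials over F_q of β^ℓ, β^{ℓ+1}, ..., β^{ℓ+d−2}. Then the cyclic code of length n over F_q generated by g(X) has minimal distance at least d (the BCH bound). -/
open Polynomial

/-- BCH bound: the cyclic code of length `n` generated by
`g = lcm(Min(β^ℓ), …, Min(β^(ℓ+d-2)))`, with `β` of order `n` in an extension of `F`,
has minimal distance at least `d`. -/
theorem stmt8 {F E : Type*} [Field F] [Field E] [Algebra F E] [DecidableEq F]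
    {n d ℓ : ℕ} (hn : 0 < n) (hd : d ≤ n + 1)
    (β : E) (hβ : orderOf β = n)
    (g : F[X]) (hg : g = (Finset.range (d - 1)).lcm fun j => minpoly F (β ^ (ℓ + j))) :
    ∀ c : Fin n → F, c ≠ 0 →
      g ∣ (∑ i : Fin n, C (c i) * X ^ (i : ℕ)) → d ≤ hammingNorm c := by
  intro c hc hdvd
  by_contra hlt
  push_neg at hlt
  classical
  set p : F[X] := ∑ i : Fin n, C (c i) * X ^ (i : ℕ) with hp
  have hβ1 : β ^ n = 1 := by rw [← hβ]; exact pow_orderOf_eq_one β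
  have hβ0 : β ≠ 0 := by
    intro h
    rw [h, zero_pow hn.ne'] at hβ1
    exact zero_ne_one hβ1
  -- every β^(ℓ+j), j < d-1, is a root of p
  have hroot : ∀ j, j < d - 1 → aeval (β ^ (ℓ + j)) p = 0 := by
    intro j hj
    have h1 : minpoly F (β ^ (ℓ + j)) ∣ p :=
      dvd_trans (hg ▸ Finset.dvd_lcm (Finset.mem_range.mpr hj)) hdvd
    obtain ⟨q, hq⟩ := h1
    rw [hq, map_mul, minpoly.aeval, zero_mul]
  -- the support
  set w : ℕ := hammingNorm c with hwdef
  set s : Finset (Fin n) := {i | c i ≠ 0} with hs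
  have hscard : s.card = w := rfl
  have hmem : ∀ i, i ∈ s ↔ c i ≠ 0 := by
    intro i; simp [hs]
  -- enumerate the support
  let eqv : {i // i ∈ s} ≃ Fin w := (s.equivFin).trans (finCongr hscard)
  let e : Fin w → Fin n := fun k => (eqv.symm k : Fin n)
  have he_mem : ∀ k, e k ∈ s := fun k => (eqv.symm k).2
  have he_inj : Function.Injective e := fun a b h => by
    apply eqv.symm.injective
    exact Subtype.ext h
  let x : Fin w → E := fun k => β ^ (e k : ℕ)
  have hx_inj : Function.Injective x := by
    intro a b h
    apply he_inj
    have := pow_injOn_Iio_orderOf (x := β)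
      (by rw [hβ]; exact (e a).2) (by rw [hβ]; exact (e b).2) h
    exact Fin.ext this
  have hx0 : ∀ k, x k ≠ 0 := fun k => pow_ne_zero _ hβ0
  -- the Vandermonde-type linear system
  let M : Matrix (Fin w) (Fin w) E := fun j k => x k ^ (ℓ + (j : ℕ))
  let v : Fin w → E := fun k => algebraMap F E (c (e k))
  have hwd : w ≤ d - 1 := Nat.le_pred_of_lt hlt
  have hMv : M.mulVec v = 0 := by
    funext j
    have hj : (j : ℕ) < d - 1 := lt_of_lt_of_le j.2 hwd
    have h0 := hroot j hj
    have hsum : aeval (β ^ (ℓ + (j : ℕ))) p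
        = ∑ i : Fin n, algebraMap F E (c i) * (β ^ (ℓ + (j : ℕ))) ^ (i : ℕ) := by
      simp [hp, map_sum, aeval_C]
    rw [hsum] at h0
    have hsub : ∑ i : Fin n, algebraMap F E (c i) * (β ^ (ℓ + (j : ℕ))) ^ (i : ℕ)
        = ∑ i ∈ s, algebraMap F E (c i) * (β ^ (ℓ + (j : ℕ))) ^ (i : ℕ) := by
      rw [← Finset.sum_subset (Finset.subset_univ s)]
      intro i _ hi
      rw [hmem] at hi
      push_neg at hi
      simp [hi]
    rw [hsub] at h0
    have hequiv : ∑ i ∈ s, algebraMap F E (c i) * (β ^ (ℓ + (j : ℕ))) ^ (i : ℕ)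
        = ∑ k : Fin w, algebraMap F E (c (e k)) * (β ^ (ℓ + (j : ℕ))) ^ ((e k : Fin n) : ℕ) := by
      rw [← Finset.sum_attach s (fun i => algebraMap F E (c i) * (β ^ (ℓ + (j : ℕ))) ^ (i : ℕ))]
      exact (Equiv.sum_comp eqv.symm
        (fun i => algebraMap F E (c (i : Fin n)) * (β ^ (ℓ + (j : ℕ))) ^ ((i : Fin n) : ℕ))).symm
    rw [hequiv] at h0
    show ∑ k : Fin w, M j k * v k = 0
    rw [← h0]
    apply Finset.sum_congr rfl
    intro k _
    show x k ^ (ℓ + (j : ℕ)) * algebraMap F E (c (e k)) = _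
    rw [mul_comm]
    congr 1
    show (β ^ ((e k : Fin n) : ℕ)) ^ (ℓ + (j : ℕ)) = (β ^ (ℓ + (j : ℕ))) ^ ((e k : Fin n) : ℕ)
    rw [← pow_mul, ← pow_mul, mul_comm]
  -- the matrix is nonsingular
  have hdet : M.det ≠ 0 := by
    have hM : M = (Matrix.vandermonde x).transpose * Matrix.diagonal (fun k => x k ^ ℓ) := by
      ext j k
      rw [Matrix.mul_diagonal]
      show x k ^ (ℓ + (j : ℕ)) = x k ^ (j : ℕ) * x k ^ ℓ
      rw [← pow_add, add_comm]
    rw [hM, Matrix.det_mul, Matrix.det_transpose, Matrix.det_diagonal]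
    apply mul_ne_zero
    · exact Matrix.det_vandermonde_ne_zero_iff.mpr hx_inj
    · exact Finset.prod_ne_zero_iff.mpr fun k _ => pow_ne_zero _ (hx0 k)
  have hv0 : v = 0 := Matrix.eq_zero_of_mulVec_eq_zero hdet hMv
  -- contradiction: c vanishes on its support
  apply hc
  funext i
  by_cases hci : c i = 0
  · exact hci
  · exfalso
    have hi : i ∈ s := (hmem i).mpr hci
    have hv : v (eqv ⟨i, hi⟩) = 0 := by rw [hv0]; rfl
    have he : e (eqv ⟨i, hi⟩) = i := by
      simp only [e, Equiv.symm_apply_apply]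
    have : algebraMap F E (c i) = 0 := by rw [← he]; exact hv
    exact hci ((map_eq_zero_iff _ (algebraMap F E).injective).mp this)
end

section
/- Let q = 2^s, β ∈ F_{q^2} of order q+1, and k ≤ q/2 even. Define g(X) = ∏_{i=(q−k)/2+1}^{(q+k)/2} (X − β^i). Then g(X) has all coefficients in F_q, has degree k, and generates an MDS BCH code of length q+1 and dimension q+1−k over F_q (i.e., a [q+1, q+1−k, k+1]_q MDS code). -/
open Polynomial


-- test: range of algebraMap = fixed points of x^q
lemma aux_range {F E : Type*} [Field F] [Fintype F] [Field E] [Fintype E] [Algebra F E]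
    (x : E) (hx : x ^ Fintype.card F = x) : x ∈ Set.range (algebraMap F E) := by
  classical
  set q := Fintype.card F with hqdef
  have hq2 : 2 ≤ q := Fintype.one_lt_card
  set P : E[X] := X ^ q - X with hP
  have hPdeg : P.natDegree = q := by
    rw [hP]
    compute_degree!
    · rw [if_neg (show ¬ (1 = q) by omega)]; simp
    · omega
  have hPne : P ≠ 0 := by
    intro h
    rw [h, natDegree_zero] at hPdeg; omega
  set T : Finset E := Finset.univ.image (algebraMap F E) with hT
  have hTcard : T.card = q := by
    rw [hT, Finset.card_image_of_injective _ (algebraMap F E).injective, Finset.card_univ]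
  have hTsub : T ⊆ P.roots.toFinset := by
    intro y hy
    rw [hT, Finset.mem_image] at hy
    obtain ⟨z, -, rfl⟩ := hy
    rw [Multiset.mem_toFinset, mem_roots hPne]
    simp only [IsRoot.def, hP, eval_sub, eval_pow, eval_X]
    rw [← map_pow, FiniteField.pow_card, sub_self]
  have hcard : P.roots.toFinset.card ≤ q := by
    calc P.roots.toFinset.card ≤ Multiset.card P.roots := P.roots.toFinset_card_le
    _ ≤ P.natDegree := P.card_roots' 
    _ = q := hPdeg
  have hTeq : T = P.roots.toFinset := Finset.eq_of_subset_of_card_le hTsub (hTcard ▸ hcard)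
  have hxT : x ∈ T := by
    rw [hTeq, Multiset.mem_toFinset, mem_roots hPne]
    simp [IsRoot.def, hP, hx]
  rw [hT, Finset.mem_image] at hxT
  obtain ⟨z, -, rfl⟩ := hxT
  exact ⟨z, rfl⟩

-- g' is fixed by x ↦ x^q coefficientwise
lemma aux_lifts {q s : ℕ} (hs : 0 < s) (hq : q = 2 ^ s)
    {F E : Type*} [Field F] [Fintype F] [Field E] [Fintype E] [Algebra F E]
    (hF : Fintype.card F = q) (hE : Fintype.card E = q ^ 2)
    (β : E) (hβ : orderOf β = q + 1)
    {a b : ℕ} (hab : a + b = q + 1) (hbq : b ≤ q) :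
    (∏ i ∈ Finset.Icc a b, (X - C (β ^ i))) ∈ Polynomial.lifts (algebraMap F E) := by
  classical
  have hβ1 : β ^ (q + 1) = 1 := hβ ▸ pow_orderOf_eq_one β
  have hβ0 : β ≠ 0 := by
    intro h
    rw [h, zero_pow (by omega)] at hβ1
    exact zero_ne_one hβ1
  -- characteristic of E is 2
  haveI : CharP E (ringChar E) := ringChar.charP E
  obtain ⟨n, hp, hcard⟩ := FiniteField.card E (ringChar E)
  have hchar2 : ringChar E = 2 := by
    have h1 : ringChar E ∣ 2 ^ (2 * s) := by
      have : (2:ℕ) ^ (2 * s) = ringChar E ^ (n:ℕ) := by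
        rw [← hcard, hE, hq, ← pow_mul, mul_comm s 2]
      rw [this]
      exact dvd_pow_self _ (by positivity)
    exact (Nat.prime_dvd_prime_iff_eq hp Nat.prime_two).1 (hp.dvd_of_dvd_pow h1)
  haveI : CharP E 2 := hchar2 ▸ ringChar.charP E
  haveI : Fact (Nat.Prime 2) := ⟨Nat.prime_two⟩
  set φ : E →+* E := iterateFrobenius E 2 s with hφ
  have hφx : ∀ x : E, φ x = x ^ q := fun x => by rw [hφ, iterateFrobenius_def, hq]
  -- the conjugate of a root is a root
  have hconj : ∀ i ∈ Finset.Icc a b, (β ^ i) ^ q = β ^ (q + 1 - i) := by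
    intro i hi
    rw [Finset.mem_Icc] at hi
    have h1 : (β ^ i) ^ q * β ^ i = 1 := by
      rw [← pow_mul, ← pow_add]
      calc β ^ (i * q + i) = (β ^ (q+1)) ^ i := by rw [← pow_mul]; ring_nf
      _ = 1 := by rw [hβ1, one_pow]
    have h2 : β ^ (q + 1 - i) * β ^ i = 1 := by
      rw [← pow_add, Nat.sub_add_cancel (by omega), hβ1]
    have hβi : β ^ i ≠ 0 := pow_ne_zero _ hβ0
    exact mul_right_cancel₀ hβi (h1.trans h2.symm)
  -- the polynomial is fixed by φ
  set g' : E[X] := ∏ i ∈ Finset.Icc a b, (X - C (β ^ i)) with hg'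
  have hmap : g'.map φ = g' := by
    rw [hg', Polynomial.map_prod]
    simp only [Polynomial.map_sub, map_X, map_C]
    rw [Finset.prod_congr rfl (fun i hi => by rw [hφx, hconj i hi])]
    apply Finset.prod_nbij' (fun i => q + 1 - i) (fun i => q + 1 - i)
    · intro i hi; rw [Finset.mem_Icc] at *; omega
    · intro i hi; rw [Finset.mem_Icc] at *; omega
    · intro i hi; rw [Finset.mem_Icc] at hi; omega
    · intro i hi; rw [Finset.mem_Icc] at hi; omega
    · intro i hi; rfl
  rw [lifts_iff_coeff_lifts]
  intro m
  have : φ (g'.coeff m) = g'.coeff m := by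
    conv_rhs => rw [← hmap]
    rw [coeff_map]
  rw [hφx] at this
  have := aux_range (F := F) (g'.coeff m) (by rw [hF]; exact this)
  exact this

lemma aux_code {F : Type*} [Field F] (g : F[X]) (hg : g ≠ 0) {n k : ℕ}
    (hdeg : g.natDegree = k) (hkn : k ≤ n) :
    ∃ W : Submodule F (Fin n → F),
      (↑W = {c : Fin n → F | g ∣ ∑ i : Fin n, C (c i) * X ^ (i : ℕ)}) ∧
      Module.finrank F W = n - k := by
  classical
  set Ψ : (Fin n → F) →ₗ[F] F[X] :=
    (degreeLT F n).subtype.comp (degreeLTEquiv F n).symm.toLinearMap with hΨdef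
  have hΨmem : ∀ c, Ψ c ∈ degreeLT F n := fun c => ((degreeLTEquiv F n).symm c).2
  have hΨ : ∀ c : Fin n → F, Ψ c = ∑ i : Fin n, C (c i) * X ^ (i : ℕ) := by
    intro c
    show ((degreeLTEquiv F n).symm c : F[X]) = _
    simp [degreeLTEquiv, C_mul_X_pow_eq_monomial]
  have hcoeff : ∀ (c : Fin n → F) (i : Fin n), (Ψ c).coeff i = c i := by
    intro c i
    have := congrFun ((degreeLTEquiv F n).apply_symm_apply c) i
    exact this
  set W : Submodule F (Fin n → F) :=
    (Submodule.restrictScalars F (Ideal.span {g})).comap Ψ with hWdef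
  have hWmem : ∀ c, c ∈ W ↔ g ∣ Ψ c := by
    intro c
    rw [hWdef, Submodule.mem_comap, Submodule.restrictScalars_mem, Ideal.mem_span_singleton]
  refine ⟨W, ?_, ?_⟩
  · ext c
    rw [Set.mem_setOf_eq, ← hΨ c, SetLike.mem_coe, hWmem]
  -- the multiplication-by-g map
  have hmul : ∀ h : degreeLT F (n - k), g * (h : F[X]) ∈ degreeLT F n := by
    intro h
    rw [mem_degreeLT]
    rcases eq_or_ne (h : F[X]) 0 with h0 | h0
    · rw [h0, mul_zero, degree_zero]
      exact WithBot.bot_lt_coe n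
    · have hd : (h : F[X]).degree < (n - k : ℕ) := mem_degreeLT.mp h.2
      rw [degree_eq_natDegree h0, Nat.cast_lt] at hd
      rw [degree_mul, degree_eq_natDegree hg, hdeg, degree_eq_natDegree h0,
        ← Nat.cast_add, Nat.cast_lt]
      omega
  set ν : degreeLT F (n - k) →ₗ[F] (Fin n → F) :=
    { toFun := fun h i => (g * (h : F[X])).coeff i
      map_add' := by
        intro h1 h2
        funext i
        simp [mul_add, coeff_add]
      map_smul' := by
        intro a h
        funext i
        simp [Algebra.mul_smul_comm, coeff_smul, smul_eq_mul] } with hνdef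
  have hν : ∀ (h : degreeLT F (n - k)) (i : Fin n), ν h i = (g * (h : F[X])).coeff i :=
    fun _ _ => rfl
  have hinj : Function.Injective ν := by
    rw [← LinearMap.ker_eq_bot, LinearMap.ker_eq_bot']
    intro h hh
    have hzero : g * (h : F[X]) = 0 := by
      ext m
      rw [coeff_zero]
      by_cases hm : m < n
      · exact congrFun hh ⟨m, hm⟩
      · refine coeff_eq_zero_of_degree_lt (lt_of_lt_of_le (mem_degreeLT.mp (hmul h)) ?_)
        exact_mod_cast Nat.le_of_not_lt hm
    rcases mul_eq_zero.mp hzero with h' | h'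
    · exact absurd h' hg
    · exact Subtype.ext h'
  have hrange : LinearMap.range ν = W := by
    ext c
    constructor
    · rintro ⟨h, rfl⟩
      rw [hWmem]
      have he : ν h = degreeLTEquiv F n ⟨g * (h : F[X]), hmul h⟩ := rfl
      have : Ψ (ν h) = g * (h : F[X]) := by
        show ((degreeLTEquiv F n).symm (ν h) : F[X]) = _
        rw [he, LinearEquiv.symm_apply_apply]
      rw [this]
      exact Dvd.intro _ rfl
    · intro hc
      rw [hWmem] at hc
      obtain ⟨h₀, hh₀⟩ := hc
      have hmem : h₀ ∈ degreeLT F (n - k) := by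
        rcases eq_or_ne h₀ 0 with h0 | h0
        · rw [h0]; exact Submodule.zero_mem _
        · rw [mem_degreeLT, degree_eq_natDegree h0, Nat.cast_lt]
          have hne : Ψ c ≠ 0 := by rw [hh₀]; exact mul_ne_zero hg h0
          have h1 : (Ψ c).natDegree < n := by
            have := mem_degreeLT.mp (hΨmem c)
            rwa [degree_eq_natDegree hne, Nat.cast_lt] at this
          have h2 : (Ψ c).natDegree = k + h₀.natDegree := by
            rw [hh₀, natDegree_mul hg h0, hdeg]
          omega
      refine ⟨⟨h₀, hmem⟩, ?_⟩
      funext i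
      rw [hν, ← hh₀, hcoeff]
  rw [← hrange, LinearMap.finrank_range_of_inj hinj,
    LinearEquiv.finrank_eq (degreeLTEquiv F (n - k)), Module.finrank_fin_fun]

lemma aux_bch {q k a : ℕ} {F E : Type*} [Field F] [DecidableEq F] [Field E] [Algebra F E]
    (β : E) (hβ : orderOf β = q + 1) (hk : 0 < k) (hak : a + k ≤ q + 1)
    (g : F[X])
    (hgmap : g.map (algebraMap F E) = ∏ i ∈ Finset.Icc a (a + k - 1), (X - C (β ^ i)))
    (c : Fin (q + 1) → F) (hc : g ∣ ∑ i : Fin (q + 1), C (c i) * X ^ (i : ℕ))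
    (hc0 : c ≠ 0) : k + 1 ≤ hammingNorm c := by
  classical
  have hβ1 : β ^ (q + 1) = 1 := hβ ▸ pow_orderOf_eq_one β
  have hβ0 : β ≠ 0 := by
    intro h
    rw [h, zero_pow (by omega)] at hβ1
    exact zero_ne_one hβ1
  by_contra hlt
  push_neg at hlt
  set S : Finset (Fin (q + 1)) := Finset.univ.filter (fun i => c i ≠ 0) with hSdef
  have hnorm : hammingNorm c = S.card := rfl
  set w : ℕ := S.card with hwdef
  have hw : w ≤ k := by omega
  have hSne : S.Nonempty := by
    obtain ⟨i, hi⟩ := Function.ne_iff.mp hc0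
    have hi' : c i ≠ 0 := by simpa using hi
    exact ⟨i, by simp [hSdef, hi']⟩
  have hw0 : 0 < w := Finset.card_pos.mpr hSne
  set e := S.orderIsoOfFin hwdef.symm with hedef
  set x : Fin w → E := fun u => β ^ (((e u : Fin (q + 1)) : ℕ)) with hxdef
  have hxinj : Function.Injective x := by
    intro u u' huu
    have h1 : (((e u : Fin (q + 1)) : ℕ)) < orderOf β := by
      rw [hβ]; exact (e u : Fin (q + 1)).isLt
    have h2 : (((e u' : Fin (q + 1)) : ℕ)) < orderOf β := by
      rw [hβ]; exact (e u' : Fin (q + 1)).isLt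
    have := pow_injOn_Iio_orderOf (Set.mem_Iio.mpr h1) (Set.mem_Iio.mpr h2) huu
    exact e.injective (Subtype.ext (Fin.ext this))
  set v : Fin w → E := fun u =>
    algebraMap F E (c (e u)) * β ^ (a * (((e u : Fin (q + 1)) : ℕ))) with hvdef
  -- evaluation of the codeword polynomial at β^m
  have heval : ∀ m, a ≤ m → m ≤ a + k - 1 →
      ∑ j : Fin (q + 1), algebraMap F E (c j) * (β ^ m) ^ (j : ℕ) = 0 := by
    intro m hm1 hm2
    have hdvd : g.map (algebraMap F E) ∣
        (∑ i : Fin (q + 1), C (c i) * X ^ (i : ℕ)).map (algebraMap F E) :=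
      Polynomial.map_dvd _ hc
    rw [hgmap] at hdvd
    obtain ⟨r, hr⟩ := hdvd
    have hz : ((∑ i : Fin (q + 1), C (c i) * X ^ (i : ℕ)).map (algebraMap F E)).eval (β ^ m)
        = 0 := by
      rw [hr, eval_mul, eval_prod]
      have : ∏ i ∈ Finset.Icc a (a + k - 1), (X - C (β ^ i)).eval (β ^ m) = 0 :=
        Finset.prod_eq_zero (Finset.mem_Icc.mpr ⟨hm1, hm2⟩) (by simp)
      rw [this, zero_mul]
    calc ∑ j : Fin (q + 1), algebraMap F E (c j) * (β ^ m) ^ (j : ℕ)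
        = ((∑ i : Fin (q + 1), C (c i) * X ^ (i : ℕ)).map (algebraMap F E)).eval (β ^ m) := by
          rw [Polynomial.map_sum]
          rw [eval_finset_sum]
          exact Finset.sum_congr rfl fun j _ => by
            simp [Polynomial.map_mul, Polynomial.map_pow]
    _ = 0 := hz
  -- the Vandermonde system
  have hsum : ∀ t : Fin w, ∑ u, v u * x u ^ (t : ℕ) = 0 := by
    intro t
    have ht : a + (t : ℕ) ≤ a + k - 1 := by omega
    have key : ∑ u, v u * x u ^ (t : ℕ)
        = ∑ u, algebraMap F E (c (e u)) * (β ^ (a + (t : ℕ))) ^ (((e u : Fin (q+1)) : ℕ)) := by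
      refine Finset.sum_congr rfl fun u _ => ?_
      rw [hvdef, hxdef]
      rw [mul_assoc, ← pow_mul, ← pow_add, ← pow_mul]
      congr 2
      ring
    rw [key]
    set f : Fin (q + 1) → E :=
      fun j => algebraMap F E (c j) * (β ^ (a + (t : ℕ))) ^ (j : ℕ) with hfdef
    have h1 : ∑ u : Fin w, algebraMap F E (c (e u)) * (β ^ (a + (t:ℕ))) ^ (((e u : Fin (q+1))) : ℕ)
        = ∑ j : {x // x ∈ S}, f j := Equiv.sum_comp e.toEquiv (fun j => f (j : Fin (q+1)))
    have h2 : ∑ j : {x // x ∈ S}, f (j : Fin (q+1)) = ∑ j ∈ S, f j := Finset.sum_coe_sort S f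
    have h3 : ∑ j ∈ S, f j = ∑ j : Fin (q + 1), f j := by
      refine Finset.sum_subset (Finset.subset_univ S) fun j _ hj => ?_
      have : c j = 0 := by simpa [hSdef] using hj
      rw [hfdef]
      simp [this]
    rw [h1, h2, h3, hfdef]
    exact heval (a + (t : ℕ)) (by omega) ht
  have hv0 : v = 0 := Matrix.eq_zero_of_forall_pow_sum_mul_pow_eq_zero hxinj hsum
  obtain ⟨i0, hi0⟩ := hSne
  set u0 : Fin w := e.symm ⟨i0, hi0⟩ with hu0
  have hvu : algebraMap F E (c (e u0)) * β ^ (a * (((e u0 : Fin (q+1))) : ℕ)) = 0 := by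
    have := congrFun hv0 u0
    simpa [hvdef] using this
  rcases mul_eq_zero.mp hvu with h' | h'
  · have hcz : c (e u0) = 0 := (algebraMap F E).injective (by rw [map_zero]; exact h')
    exact (Finset.mem_filter.mp (e u0).2).2 hcz
  · exact pow_ne_zero _ hβ0 h'


noncomputable def minDist {ι F : Type*} [Fintype ι] [DecidableEq F] [Zero F]
    (Γ : Set (ι → F)) : ℕ :=
  sInf {w | ∃ c ∈ Γ, c ≠ 0 ∧ hammingNorm c = w}

/-- Direct construction, even case: for `q = 2^s`, `β ∈ F_{q²}` of order `q+1` and `k`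
even with `2k ≤ q`, the polynomial `g(X) = ∏_{i=(q-k)/2+1}^{(q+k)/2} (X - β^i)` has all
coefficients in `F_q`, has degree `k`, and generates a `[q+1, q+1-k, k+1]` MDS BCH code. -/
theorem stmt12 {q s k : ℕ} (hs : 0 < s) (hq : q = 2 ^ s)
    {F E : Type*} [Field F] [Fintype F] [DecidableEq F] [Field E] [Fintype E] [Algebra F E]
    (hF : Fintype.card F = q) (hE : Fintype.card E = q ^ 2)
    (β : E) (hβ : orderOf β = q + 1)
    (hk : 0 < k) (hkq : 2 * k ≤ q) (hke : Even k)
    (g' : E[X])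
    (hg' : g' = ∏ i ∈ Finset.Icc ((q - k) / 2 + 1) ((q + k) / 2), (X - C (β ^ i))) :
    g' ∈ Polynomial.lifts (algebraMap F E) ∧
    ∀ g : F[X], g.map (algebraMap F E) = g' →
      g.natDegree = k ∧
      minDist {c : Fin (q + 1) → F | g ∣ ∑ i : Fin (q + 1), C (c i) * X ^ (i : ℕ)} = k + 1 ∧
      Module.finrank F (Submodule.span F
        {c : Fin (q + 1) → F | g ∣ ∑ i : Fin (q + 1), C (c i) * X ^ (i : ℕ)}) = q + 1 - k := by
  classical
  have hq2 : 2 ≤ q := by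
    rw [hq]
    calc 2 = 2 ^ 1 := (pow_one 2).symm
    _ ≤ 2 ^ s := Nat.pow_le_pow_right (by norm_num) hs
  have hqe : q % 2 = 0 := by
    rw [hq, Nat.even_iff.mp (Nat.even_pow.mpr ⟨even_two, by omega⟩)]
  have hke' : k % 2 = 0 := Nat.even_iff.mp hke
  set a : ℕ := (q - k) / 2 + 1 with hadef
  set b : ℕ := (q + k) / 2 with hbdef
  have hab : a + b = q + 1 := by omega
  have hbq : b ≤ q := by omega
  have hba : b = a + k - 1 := by omega
  constructor
  · rw [hg']
    exact aux_lifts hs hq hF hE β hβ hab hbq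
  intro g hgmap
  have hg'mon : g'.Monic := by
    rw [hg']
    exact monic_prod_of_monic _ _ fun i _ => monic_X_sub_C _
  have hg'deg : g'.natDegree = k := by
    rw [hg', natDegree_prod_of_monic _ _ fun i _ => monic_X_sub_C _]
    simp only [natDegree_X_sub_C]
    rw [Finset.sum_const, Nat.card_Icc, smul_eq_mul, mul_one]
    omega
  have hgdeg : g.natDegree = k := by
    rw [← hg'deg, ← hgmap, natDegree_map]
  have hgne : g ≠ 0 := by
    intro h
    rw [h, Polynomial.map_zero] at hgmap
    exact hg'mon.ne_zero hgmap.symm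
  obtain ⟨W, hWset, hWrank⟩ := aux_code g hgne hgdeg (show k ≤ q + 1 by omega)
  have hgmap' : g.map (algebraMap F E) = ∏ i ∈ Finset.Icc a (a + k - 1), (X - C (β ^ i)) := by
    rw [hgmap, hg', ← hba]
  have hlow : ∀ c ∈ {c : Fin (q + 1) → F | g ∣ ∑ i : Fin (q + 1), C (c i) * X ^ (i : ℕ)},
      c ≠ 0 → k + 1 ≤ hammingNorm c := fun c hc hc0 =>
    aux_bch β hβ hk (by omega) g hgmap' c hc hc0
  -- Singleton-type upper bound
  have hup : ∃ c ∈ {c : Fin (q + 1) → F | g ∣ ∑ i : Fin (q + 1), C (c i) * X ^ (i : ℕ)},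
      c ≠ 0 ∧ hammingNorm c ≤ k + 1 := by
    set ρ : W →ₗ[F] (Fin (q - k) → F) :=
      (LinearMap.funLeft F F (Fin.castLE (show q - k ≤ q + 1 by omega))).comp W.subtype with hρ
    have hnotinj : ¬ Function.Injective ρ := by
      intro hinj
      have h1 := LinearMap.finrank_le_finrank_of_injective hinj
      rw [hWrank, Module.finrank_fin_fun] at h1
      omega
    rw [← LinearMap.ker_eq_bot] at hnotinj
    obtain ⟨x, hxmem, hx0⟩ := Submodule.exists_mem_ne_zero_of_ne_bot hnotinj
    refine ⟨(x : Fin (q + 1) → F), ?_, fun h => hx0 (Subtype.ext h), ?_⟩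
    · have := x.2
      rwa [← SetLike.mem_coe, hWset] at this
    · have hzero : ∀ i : Fin (q + 1), (i : ℕ) < q - k → (x : Fin (q + 1) → F) i = 0 := by
        intro i hi
        have h0 := congrFun (LinearMap.mem_ker.mp hxmem) ⟨(i : ℕ), hi⟩
        have : ρ x ⟨(i : ℕ), hi⟩ = (x : Fin (q + 1) → F) i := by
          rw [hρ]
          simp only [LinearMap.comp_apply, LinearMap.funLeft_apply, Submodule.coe_subtype]
          congr 1
        rw [this] at h0
        exact h0
      have hsub : Finset.univ.filter (fun i => (x : Fin (q + 1) → F) i ≠ 0) ⊆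
          Finset.Ici (⟨q - k, by omega⟩ : Fin (q + 1)) := by
        intro i hi
        rw [Finset.mem_filter] at hi
        rw [Finset.mem_Ici, Fin.le_def]
        have hni : ¬ ((i : ℕ) < q - k) := fun hlt => hi.2 (hzero i hlt)
        show q - k ≤ (i : ℕ)
        omega
      calc hammingNorm (x : Fin (q + 1) → F)
          = (Finset.univ.filter (fun i => (x : Fin (q + 1) → F) i ≠ 0)).card := rfl
      _ ≤ (Finset.Ici (⟨q - k, by omega⟩ : Fin (q + 1))).card := Finset.card_le_card hsub
      _ = k + 1 := by
          rw [Fin.card_Ici]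
          show q + 1 - (q - k) = k + 1
          omega
  refine ⟨hgdeg, ?_, ?_⟩
  · obtain ⟨c, hcΓ, hcne, hcle⟩ := hup
    have hceq : hammingNorm c = k + 1 := le_antisymm hcle (hlow c hcΓ hcne)
    show sInf {w | ∃ c ∈ _, c ≠ 0 ∧ hammingNorm c = w} = k + 1
    refine le_antisymm (Nat.sInf_le ⟨c, hcΓ, hcne, hceq⟩) (le_csInf ⟨k + 1, c, hcΓ, hcne, hceq⟩ ?_)
    rintro w ⟨c', h1, h2, rfl⟩
    exact hlow c' h1 h2
  · rw [← hWset, Submodule.span_eq, hWrank]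
end

section
/- Let q = 2^s and k ≤ q/2. There exists a monic polynomial g(X) ∈ F_q[X] of degree k such that the k-th power of the companion matrix of g is MDS (that is, [I_k | C^k] generates a [2k, k, k+1]_q code, where C = Companion matrix of g). -/
open Polynomial

/-!
Identify a message `x ∈ F_q^k` with the polynomial `x(X) = ∑ xᵢ Xⁱ`. Multiplying a row vector by
the companion matrix `C` of `g` is multiplication by `X` modulo `g`, so the codeword `(x, x C^k)`
corresponds to the polynomial `X^k x(X) - (x C^k)(X)`: it is divisible by `g`, has degree `< 2k`,
and has exactly as many nonzero coefficients as the codeword has nonzero entries.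

Take `g = ∏_{j<k} (X - ζ^(2j-(k-1)))` with `ζ` a primitive `(q+1)`-th root of unity in the
algebraic closure. As `ζ^q = ζ⁻¹`, Frobenius maps the root `ζ^e` to `ζ^(-e)`, and the exponents
`2j - (k-1)` are symmetric about `0`, so `g` has coefficients in `F_q`. Its roots are `k` consecutive
powers of `ζ²`, again primitive since `q + 1` is odd, so by the BCH bound every nonzero multiple of
`g` of degree `≤ q` has at least `k + 1` nonzero coefficients. The Singleton bound, attained by the
codeword of a unit vector, gives the reverse inequality.
-/

open Finset
open scoped Matrix

theorem minDist_eq_of_forall_le_of_exists {ι F : Type*} [Fintype ι] [DecidableEq F] [Zero F]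
    {Γ : Set (ι → F)} {d : ℕ} (hle : ∀ c ∈ Γ, c ≠ 0 → d ≤ hammingNorm c)
    (hex : ∃ c ∈ Γ, c ≠ 0 ∧ hammingNorm c ≤ d) : minDist Γ = d := by
  obtain ⟨c, hc, hc0, hcd⟩ := hex
  have hmem : hammingNorm c ∈ {w | ∃ c ∈ Γ, c ≠ 0 ∧ hammingNorm c = w} := ⟨c, hc, hc0, rfl⟩
  refine le_antisymm ((Nat.sInf_le hmem).trans hcd) (le_csInf ⟨_, hmem⟩ ?_)
  rintro _ ⟨c', hc', hc'0, rfl⟩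
  exact hle c' hc' hc'0

theorem hammingNorm_sumElim {α β K : Type*} [Fintype α] [Fintype β] [Zero K] [DecidableEq K]
    (x : α → K) (y : β → K) :
    hammingNorm (Sum.elim x y) = hammingNorm x + hammingNorm y := by
  simp only [hammingNorm, card_filter, Fintype.sum_sum_type, Sum.elim_inl, Sum.elim_inr]
  rfl

theorem hammingNorm_pi_single {ι K : Type*} [Fintype ι] [DecidableEq ι] [Zero K] [DecidableEq K]
    (i : ι) {a : K} (ha : a ≠ 0) : hammingNorm (Pi.single (M := fun _ => K) i a) = 1 := by
  simp [hammingNorm, Pi.single_apply, ha, filter_eq']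

namespace Polynomial

theorem card_support_ofFn {R : Type*} [Semiring R] [DecidableEq R] {n : ℕ} (v : Fin n → R) :
    #(ofFn n v).support = hammingNorm v := by
  have : (ofFn n v).support = ({i | v i ≠ 0} : Finset (Fin n)).map Fin.valEmbedding := by
    ext m
    rcases lt_or_ge m n with hm | hm
    · simp [hm, Fin.exists_iff]
    · simp [hm]
      omega
  rw [this, card_map, hammingNorm]

theorem card_support_X_pow_mul_sub {R : Type*} [Ring R] {k : ℕ} (A : R[X]) {B : R[X]}
    (hB : B.degree < k) : #(X ^ k * A - B).support = #A.support + #B.support := by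
  have hB' : ∀ n, k ≤ n → B.coeff n = 0 := fun n hn =>
    coeff_eq_zero_of_degree_lt (hB.trans_le (by exact_mod_cast hn))
  have hsupp : (X ^ k * A - B).support = A.support.map (addLeftEmbedding k) ∪ B.support := by
    ext n
    rcases le_or_gt k n with hn | hn
    · obtain ⟨m, rfl⟩ := Nat.exists_eq_add_of_le hn
      simp [coeff_X_pow_mul', hB' _ hn]
    · simp [coeff_X_pow_mul', hn.not_ge]
      omega
  have hdisj : Disjoint (A.support.map (addLeftEmbedding k)) B.support := by
    refine disjoint_left.2 fun n hA hB => ?_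
    obtain ⟨m, -, rfl⟩ := mem_map.1 hA
    exact mem_support_iff.1 hB (hB' _ (Nat.le_add_right k m))
  rw [hsupp, card_union_of_disjoint hdisj, card_map]

theorem hammingNorm_sumElim_eq_card_support {R : Type*} [Ring R] [DecidableEq R] {k : ℕ}
    (x y : Fin k → R) : hammingNorm (Sum.elim x y) = #(X ^ k * ofFn k x - ofFn k y).support := by
  rw [hammingNorm_sumElim, card_support_X_pow_mul_sub _ (ofFn_degree_lt _), card_support_ofFn,
    card_support_ofFn]

theorem natDegree_X_pow_mul_ofFn_sub_ofFn_lt {R : Type*} [Ring R] [DecidableEq R] {k : ℕ}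
    (hk : 0 < k) (x y : Fin k → R) : (X ^ k * ofFn k x - ofFn k y).natDegree < 2 * k := by
  refine (natDegree_sub_le _ _).trans_lt (max_lt ?_ ?_)
  · have := ofFn_natDegree_lt hk x
    have := natDegree_X_pow_le (R := R) k
    exact natDegree_mul_le.trans_lt (by omega)
  · exact (ofFn_natDegree_lt hk y).trans_le (by omega)

section Companion

variable {R : Type*} [CommRing R] [DecidableEq R] {k : ℕ} {g : R[X]}

def companion (g : R[X]) (k : ℕ) : Matrix (Fin k) (Fin k) R :=
  Matrix.of fun i j =>
    if (i : ℕ) + 1 = k then -(g.coeff j) else if (j : ℕ) = (i : ℕ) + 1 then 1 else 0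

theorem ofFn_companion_row (hg : g.Monic) (hdeg : g.natDegree = k) (i : Fin k) :
    ofFn k (companion g k i) = X ^ ((i : ℕ) + 1) - if (i : ℕ) + 1 = k then g else 0 := by
  ext n
  rcases lt_or_ge n k with hn | hn
  · rw [ofFn_coeff_eq_val_of_lt _ hn, companion, Matrix.of_apply]
    by_cases hi : (i : ℕ) + 1 = k <;> simp [hi, coeff_X_pow, hn.ne]
  · rw [ofFn_coeff_eq_zero_of_ge _ hn]
    by_cases hi : (i : ℕ) + 1 = k
    · rcases hn.eq_or_lt with rfl | hn
      · simp [hi, ← hdeg, hg.coeff_natDegree]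
      · simp [hi, coeff_X_pow, hn.ne', coeff_eq_zero_of_natDegree_lt (hdeg ▸ hn)]
    · simp [hi, coeff_X_pow]
      omega

theorem dvd_X_mul_ofFn_sub_ofFn_vecMul_companion (hg : g.Monic) (hdeg : g.natDegree = k)
    (y : Fin k → R) : g ∣ X * ofFn k y - ofFn k (y ᵥ* companion g k) := by
  have hy : ofFn k y = ∑ i, y i • X ^ (i : ℕ) := by
    simp [ofFn_eq_sum_monomial, smul_X_eq_monomial]
  rw [Matrix.vecMul_eq_sum, map_sum, hy, mul_sum, ← sum_sub_distrib]
  refine dvd_sum fun i _ => ?_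
  rw [map_smul, ofFn_companion_row hg hdeg, mul_smul_comm, ← smul_sub, ← pow_succ',
    sub_sub_cancel]
  split_ifs
  · exact smul_eq_C_mul (y i) ▸ dvd_mul_left g _
  · simp

theorem dvd_X_pow_mul_ofFn_sub_ofFn_vecMul_companion_pow (hg : g.Monic) (hdeg : g.natDegree = k)
    (m : ℕ) (x : Fin k → R) : g ∣ X ^ m * ofFn k x - ofFn k (x ᵥ* companion g k ^ m) := by
  induction m with
  | zero => simp
  | succ m ih =>
    set y := x ᵥ* companion g k ^ m
    have hsplit : X ^ (m + 1) * ofFn k x - ofFn k (y ᵥ* companion g k) =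
        X * (X ^ m * ofFn k x - ofFn k y) + (X * ofFn k y - ofFn k (y ᵥ* companion g k)) := by
      ring
    rw [pow_succ (companion g k), ← Matrix.vecMul_vecMul, hsplit]
    exact dvd_add (dvd_mul_of_dvd_right ih X) (dvd_X_mul_ofFn_sub_ofFn_vecMul_companion hg hdeg y)

end Companion

theorem lt_card_support_of_eval_mul_pow_eq_zero {K : Type*} [Field K] {α β : K} (hβ : β ≠ 0)
    {p : K[X]} (hp : p ≠ 0) (hα : Set.InjOn (α ^ ·) p.support) {m : ℕ}
    (hroots : ∀ j < m, p.eval (β * α ^ j) = 0) : m < #p.support := by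
  by_contra! hm
  let e := p.support.equivFin.symm
  have hcoeff : (fun i => p.coeff (e i) * β ^ (e i : ℕ)) = 0 := by
    refine Matrix.eq_zero_of_forall_pow_sum_mul_pow_eq_zero (f := fun i => α ^ (e i : ℕ))
      (fun i j hij => e.injective (Subtype.ext (hα (e i).2 (e j).2 hij))) fun j => ?_
    rw [← hroots j (j.2.trans_le hm), eval_eq_sum, sum_def, ← sum_coe_sort p.support]
    refine Fintype.sum_equiv e _ _ fun i => ?_
    ring
  obtain ⟨n, hn⟩ := nonempty_support_iff.2 hp
  have := congrFun hcoeff (e.symm ⟨n, hn⟩)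
  simp only [Equiv.apply_symm_apply, Pi.zero_apply, mul_eq_zero, pow_eq_zero_iff', hβ] at this
  exact mem_support_iff.1 hn (this.resolve_right (by simp))

theorem map_prod_X_sub_C_eq_self {K : Type*} [CommRing K] (φ : K →+* K) {k : ℕ} {r : ℕ → K}
    (hr : ∀ j < k, φ (r j) = r (k - 1 - j)) :
    (∏ j ∈ range k, (X - C (r j))).map φ = ∏ j ∈ range k, (X - C (r j)) := by
  rw [Polynomial.map_prod, ← prod_range_reflect (fun j => X - C (r j)) k]
  refine prod_congr rfl fun j hj => ?_
  rw [Polynomial.map_sub, map_X, map_C, hr j (mem_range.1 hj)]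

end Polynomial

namespace FiniteField

variable {F K : Type*} [Field F] [Fintype F] [Field K] [Algebra F K]

theorem mem_range_algebraMap_of_pow_card_eq_self {x : K} (hx : x ^ Fintype.card F = x) :
    x ∈ (algebraMap F K).range := by
  have hsplits : (X ^ Fintype.card F - X : F[X]).Splits := by
    rw [splits_iff_card_roots, roots_X_pow_card_sub_X, ← Finset.card_def, card_univ,
      X_pow_card_sub_X_natDegree_eq F Fintype.one_lt_card]
  refine hsplits.mem_range_of_isRoot (X_pow_card_sub_X_ne_zero F Fintype.one_lt_card) ?_
  simp [hx]

theorem exists_monic_map_eq_of_map_frobeniusAlgHom_eq_self {p : K[X]} (hp : p.Monic)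
    (hφ : p.map (frobeniusAlgHom F K : K →+* K) = p) :
    ∃ g : F[X], g.Monic ∧ g.map (algebraMap F K) = p := by
  have hlifts : p ∈ lifts (algebraMap F K) := by
    refine (lifts_iff_coeff_lifts p).2 fun n => mem_range_algebraMap_of_pow_card_eq_self ?_
    simpa using congrArg (coeff · n) hφ
  obtain ⟨g, hmap, -, hmonic⟩ := lifts_and_natDegree_eq_and_monic hlifts hp
  exact ⟨g, hmonic, hmap⟩

theorem exists_monic_map_eq_prod_X_sub_C_zpow {ζ : K} (hζ : ζ ^ (Fintype.card F + 1) = 1)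
    (k : ℕ) : ∃ g : F[X], g.Monic ∧
      g.map (algebraMap F K) = ∏ j ∈ range k, (X - C (ζ ^ (2 * (j : ℤ) - (k - 1)))) := by
  have hζq : ζ ^ Fintype.card F = ζ⁻¹ := eq_inv_of_mul_eq_one_left (by rw [← pow_succ, hζ])
  refine exists_monic_map_eq_of_map_frobeniusAlgHom_eq_self
    (monic_prod_of_monic _ _ fun j _ => monic_X_sub_C _) (map_prod_X_sub_C_eq_self _ ?_)
  intro j hj
  show (ζ ^ (2 * (j : ℤ) - (k - 1))) ^ Fintype.card F = _
  rw [← zpow_natCast, ← zpow_mul, mul_comm, zpow_mul, zpow_natCast, hζq,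
    inv_zpow', Nat.cast_sub (by omega)]
  congr 1
  push_cast [Nat.one_le_iff_ne_zero.2 (by omega : k ≠ 0)]
  ring

variable (F)

theorem exists_monic_natDegree_eq_forall_dvd_lt_card_support (hF : Even (Fintype.card F))
    (k : ℕ) : ∃ g : F[X], g.Monic ∧ g.natDegree = k ∧
      ∀ P : F[X], P ≠ 0 → P.natDegree ≤ Fintype.card F → g ∣ P → k < #P.support := by
  set q := Fintype.card F
  let K := AlgebraicClosure F
  have : NeZero ((q + 1 : ℕ) : K) := ⟨by
    rw [Nat.cast_succ, ← map_natCast (algebraMap F K), cast_card_eq_zero, map_zero, zero_add]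
    exact one_ne_zero⟩
  obtain ⟨ζ, hζ⟩ := HasEnoughRootsOfUnity.exists_primitiveRoot K (q + 1)
  have hζ0 : ζ ≠ 0 := hζ.ne_zero q.succ_ne_zero
  have hζ2 : IsPrimitiveRoot (ζ ^ 2) (q + 1) :=
    hζ.pow_of_coprime 2 (Nat.coprime_two_left.2 hF.add_one)
  obtain ⟨g, hg, hmap⟩ := exists_monic_map_eq_prod_X_sub_C_zpow hζ.pow_eq_one k
  refine ⟨g, hg, ?_, fun P hP hPdeg hgP => ?_⟩
  · rw [← natDegree_map (algebraMap F K), hmap,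
      natDegree_prod_of_monic _ _ fun j _ => monic_X_sub_C _]
    simp
  have hsupp := support_map_of_injective P (algebraMap F K).injective
  rw [← hsupp]
  refine lt_card_support_of_eval_mul_pow_eq_zero (α := ζ ^ 2) (zpow_ne_zero (-(k - 1 : ℤ)) hζ0)
    (Polynomial.map_ne_zero hP) (fun a ha b hb hab => ?_) fun j hj => ?_
  · rw [hsupp] at ha hb
    exact hζ2.pow_inj (Nat.lt_succ_of_le ((le_natDegree_of_mem_supp a ha).trans hPdeg))
      (Nat.lt_succ_of_le ((le_natDegree_of_mem_supp b hb).trans hPdeg)) hab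
  · obtain ⟨h, rfl⟩ := hgP
    have hroot : ζ ^ (-(k - 1 : ℤ)) * (ζ ^ 2) ^ j = ζ ^ (2 * (j : ℤ) - (k - 1)) := by
      rw [← zpow_natCast, ← zpow_natCast, ← zpow_mul, ← zpow_add₀ hζ0]
      congr 1
      push_cast
      ring
    rw [hroot, Polynomial.map_mul, hmap, eval_mul, eval_prod,
      prod_eq_zero (mem_range.2 hj) (by simp), zero_mul]

end FiniteField

/-- For `q = 2^s` and `k ≤ q/2`, there exists a monic polynomial `g` of degree `k` over
`F_q` whose companion matrix `C` satisfies: `[I_k | C^k]` generates a `[2k, k, k+1]` MDS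
code. -/
theorem stmt18 {q s k : ℕ} (hs : 0 < s) (hq : q = 2 ^ s) (hk : 0 < k) (hkq : 2 * k ≤ q)
    {F : Type*} [Field F] [Fintype F] [DecidableEq F] (hF : Fintype.card F = q) :
    ∃ g : F[X], g.Monic ∧ g.natDegree = k ∧
      ∀ Cmat : Matrix (Fin k) (Fin k) F,
        (∀ i j : Fin k, Cmat i j =
          if (i : ℕ) + 1 = k then -(g.coeff j)
          else if (j : ℕ) = (i : ℕ) + 1 then 1 else 0) →
        minDist (Set.range fun x : Fin k → F =>
          Matrix.vecMul x (Matrix.fromCols (1 : Matrix (Fin k) (Fin k) F) (Cmat ^ k))) = k + 1 := by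
  have heven : Even (Fintype.card F) := hF ▸ hq ▸ (Nat.even_pow.2 ⟨even_two, hs.ne'⟩)
  obtain ⟨g, hg, hdeg, hbch⟩ :=
    FiniteField.exists_monic_natDegree_eq_forall_dvd_lt_card_support F heven k
  refine ⟨g, hg, hdeg, fun Cmat hC => ?_⟩
  obtain rfl : Cmat = companion g k := Matrix.ext hC
  refine minDist_eq_of_forall_le_of_exists ?_ ?_
  · rintro _ ⟨x, rfl⟩ hc
    dsimp only at hc ⊢
    rw [Matrix.vecMul_fromCols, Matrix.vecMul_one] at hc ⊢
    rw [← hammingNorm_ne_zero_iff, hammingNorm_sumElim_eq_card_support] at hc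
    rw [hammingNorm_sumElim_eq_card_support]
    refine hbch _ (mt card_support_eq_zero.2 hc)
      ((natDegree_X_pow_mul_ofFn_sub_ofFn_lt hk _ _).le.trans (hF ▸ hkq))
      (dvd_X_pow_mul_ofFn_sub_ofFn_vecMul_companion_pow hg hdeg k x)
  · refine ⟨_, ⟨Pi.single ⟨0, hk⟩ 1, rfl⟩, ?_, ?_⟩
    · intro h
      simpa using congrFun h (Sum.inl ⟨0, hk⟩)
    · dsimp only
      rw [Matrix.vecMul_fromCols, Matrix.vecMul_one, hammingNorm_sumElim,
        hammingNorm_pi_single _ one_ne_zero, add_comm]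
      exact Nat.add_le_add_right (hammingNorm_le_card_fintype.trans_eq (Fintype.card_fin k)) 1
end
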